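/- The number of lattice paths from (0,0,0) to (n,n,n) using unit steps in the positive x, y, z directions that stay within the region {(x,y,z) ∈ ℤ³ : 0 ≤ z ≤ y ≤ x ≤ y+1} equals (1/(2n+1)) * binomial(3n, n). -/

import Mathlib

/-- The three step types of a Motzkin path: H = (1,0), U = (1,1), D = (1,-1). -/
inductive Step : Type | H | U | D
deriving DecidableEq, Repr

/-- The region 0 ≤ z ≤ y ≤ x ≤ y + 1 in ℤ³. -/
def InRegion (p : ℤ × ℤ × ℤ) : Prop :=
  0 ≤ p.2.2 ∧ p.2.2 ≤ p.2.1 ∧ p.2.1 ≤ p.1 ∧ p.1 ≤ p.2.1 + 1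

/-- A lattice path from (0,0,0) to (n,n,n) with unit steps in the positive coordinate
directions, all of whose intermediate points lie in the region 0 ≤ z ≤ y ≤ x ≤ y+1.
The path is modelled by its list of steps; points are partial sums. -/
def IsFrogPath (n : ℕ) (s : List (ℤ × ℤ × ℤ)) : Prop :=
  (∀ m ∈ s, m = (1, 0, 0) ∨ m = (0, 1, 0) ∨ m = (0, 0, 1)) ∧
  (∀ p : List (ℤ × ℤ × ℤ), p <+: s → InRegion p.sum) ∧
  s.sum = ((n : ℤ), (n : ℤ), (n : ℤ))

/-!
Inside the region the `x`- and `y`-steps of a path must alternate, so a point of the region is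
determined by the number `k` of such steps and its height `c`, and it lies in the region iff
`2c ≤ k`. Splitting off the last step gives Pascal's recurrence
`f(k+1, c) = f(k, c) + f(k+1, c-1)` for the number `f(k, c)` of paths, on `2c ≤ k + 1`, with
`f = 0` on the line `2c = k + 1`. The ballot numbers `C(k+c, c) - 2 C(k+c, c-1)` satisfy the same
recurrence and also vanish on that line, so they equal `f`; at `k = 2n`, `c = n` this is
`C(3n, n) - 2 C(3n, n-1) = C(3n, n) / (2n + 1)`.
-/

section LatticePaths

variable {G : Type*} [AddGroup G]

def latticePaths (S : Set G) (R : G → Prop) (v : G) : Set (List G) :=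
  {s | (∀ m ∈ s, m ∈ S) ∧ (∀ p, p <+: s → R p.sum) ∧ s.sum = v}

variable {S : Set G} {R : G → Prop}

theorem latticePaths_eq_empty {v : G} (hv : ¬ R v) : latticePaths S R v = ∅ :=
  Set.eq_empty_of_forall_notMem fun _ ⟨_, hR, hsum⟩ => hv (hsum ▸ hR _ List.prefix_rfl)

theorem concat_mem_latticePaths_iff {t : List G} {u v : G} :
    t ++ [u] ∈ latticePaths S R v ↔ u ∈ S ∧ R v ∧ t ∈ latticePaths S R (v - u) := by
  simp only [latticePaths, Set.mem_ofPred_eq, List.mem_append, List.mem_singleton,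
    List.prefix_concat_iff, List.sum_append, List.sum_singleton, eq_sub_iff_add_eq]
  constructor
  · rintro ⟨hS, hR, rfl⟩
    exact ⟨hS u (Or.inr rfl), by simpa using hR _ (Or.inl rfl), fun m hm => hS m (Or.inl hm),
      fun p hp => hR p (Or.inr hp), rfl⟩
  · rintro ⟨hu, hv, hS, hR, rfl⟩
    refine ⟨?_, ?_, rfl⟩
    · rintro m (hm | rfl)
      exacts [hS m hm, hu]
    · rintro p (rfl | hp)
      · simpa using hv
      · exact hR p hp

noncomputable def latticePathsEquivSigma {v : G} (hv : v ≠ 0) (hRv : R v) :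
    (Σ u : S, latticePaths S R (v - u)) ≃ latticePaths S R v :=
  Equiv.ofBijective
    (fun x => ⟨x.2.1 ++ [x.1.1], concat_mem_latticePaths_iff.mpr ⟨x.1.2, hRv, x.2.2⟩⟩)
    (by
      constructor
      · rintro ⟨⟨u, hu⟩, ⟨t, ht⟩⟩ ⟨⟨u', hu'⟩, ⟨t', ht'⟩⟩ h
        obtain ⟨rfl, h'⟩ := List.append_inj' (Subtype.ext_iff.mp h) rfl
        obtain rfl : u = u' := List.singleton_inj.mp h'
        rfl
      · rintro ⟨s, hs⟩
        rcases List.eq_nil_or_concat s with rfl | ⟨t, u, rfl⟩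
        · exact absurd hs.2.2.symm hv
        · rw [List.concat_eq_append] at hs
          obtain ⟨hu, -, ht⟩ := concat_mem_latticePaths_iff.mp hs
          exact ⟨⟨⟨u, hu⟩, ⟨t, ht⟩⟩, by simp⟩)

theorem card_latticePaths_of_ne_zero {S : Finset G} {v : G} (hv : v ≠ 0) (hRv : R v)
    [∀ w, Finite (latticePaths S R w)] :
    Nat.card (latticePaths S R v) = ∑ u ∈ S, Nat.card (latticePaths S R (v - u)) := by
  rw [← Nat.card_congr (latticePathsEquivSigma hv hRv), Nat.card_sigma,
    ← Finset.sum_coe_sort S]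
  rfl

theorem length_eq_of_mem_latticePaths (deg : G →+ ℤ) (hdeg : ∀ u ∈ S, deg u = 1)
    {v : G} {s : List G} (hs : s ∈ latticePaths S R v) : (s.length : ℤ) = deg v := by
  obtain ⟨hS, -, rfl⟩ := hs
  rw [map_list_sum, List.map_congr_left (fun u hu => hdeg u (hS u hu))]
  simp

theorem latticePaths_finite (deg : G →+ ℤ) (hdeg : ∀ u ∈ S, deg u = 1) (hS : S.Finite)
    (v : G) : (latticePaths S R v).Finite := by
  have : Finite S := hS
  refine ((List.finite_length_eq S (deg v).toNat).image (List.map Subtype.val)).subset ?_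
  intro s hs
  refine ⟨s.attach.map fun u => ⟨u.1, hs.1 u.1 u.2⟩, ?_, by simp⟩
  simp [← length_eq_of_mem_latticePaths deg hdeg hs]

theorem latticePaths_zero (deg : G →+ ℤ) (hdeg : ∀ u ∈ S, deg u = 1) (hR : R 0) :
    latticePaths S R 0 = {[]} := by
  ext s
  refine ⟨fun hs => List.length_eq_zero_iff.mp ?_, ?_⟩
  · exact_mod_cast (length_eq_of_mem_latticePaths deg hdeg hs).trans deg.map_zero
  · rintro rfl
    exact ⟨by simp, fun p hp => by simpa [List.prefix_nil.mp hp] using hR, rfl⟩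

end LatticePaths

section FrogPaths

abbrev unitSteps : Finset (ℤ × ℤ × ℤ) := {(1, 0, 0), (0, 1, 0), (0, 0, 1)}

def coordSum : ℤ × ℤ × ℤ →+ ℤ where
  toFun v := v.1 + v.2.1 + v.2.2
  map_zero' := rfl
  map_add' _ _ := by simp only [Prod.fst_add, Prod.snd_add]; ring

theorem coordSum_of_mem_unitSteps : ∀ u ∈ (unitSteps : Set (ℤ × ℤ × ℤ)), coordSum u = 1 := by
  simp [coordSum]

instance (v : ℤ × ℤ × ℤ) : Finite (latticePaths (unitSteps : Set (ℤ × ℤ × ℤ)) InRegion v) :=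
  (latticePaths_finite coordSum coordSum_of_mem_unitSteps (Finset.finite_toSet _) v).to_subtype

noncomputable def frogCount (v : ℤ × ℤ × ℤ) : ℕ :=
  Nat.card (latticePaths (unitSteps : Set (ℤ × ℤ × ℤ)) InRegion v)

theorem frogCount_eq_zero {v : ℤ × ℤ × ℤ} (hv : ¬ InRegion v) : frogCount v = 0 := by
  simp [frogCount, latticePaths_eq_empty hv]

theorem frogCount_zero : frogCount 0 = 1 := by
  rw [frogCount, latticePaths_zero coordSum coordSum_of_mem_unitSteps (by simp [InRegion]),
    Nat.card_unique]

theorem frogCount_eq_add {v : ℤ × ℤ × ℤ} (hv : v ≠ 0) (hRv : InRegion v) :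
    frogCount v = frogCount (v - (1, 0, 0)) + frogCount (v - (0, 1, 0)) +
      frogCount (v - (0, 0, 1)) := by
  rw [frogCount, card_latticePaths_of_ne_zero hv hRv, Finset.sum_insert (by decide),
    Finset.sum_insert (by decide), Finset.sum_singleton, add_assoc]
  rfl

def frogPoint (k c : ℕ) : ℤ × ℤ × ℤ := (((k + 1) / 2 : ℕ), (k / 2 : ℕ), c)

theorem inRegion_frogPoint_iff {k c : ℕ} : InRegion (frogPoint k c) ↔ 2 * c ≤ k := by
  simp only [InRegion, frogPoint]
  omega

theorem frogCount_frogPoint_succ {k c : ℕ} (h : 2 * c ≤ k + 1) :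
    frogCount (frogPoint (k + 1) c) =
      frogCount (frogPoint k c) + frogCount (frogPoint (k + 1) c - (0, 0, 1)) := by
  have hne : frogPoint (k + 1) c ≠ 0 := by
    simp only [frogPoint, ne_eq, Prod.mk_eq_zero, Nat.cast_eq_zero]
    omega
  rw [frogCount_eq_add hne (inRegion_frogPoint_iff.mpr h)]
  congr 1
  obtain ⟨m, rfl | rfl⟩ := Nat.even_or_odd' k
  · rw [frogCount_eq_zero (v := frogPoint (2 * m + 1) c - (0, 1, 0)), add_zero]
    · congr 1
      simp only [frogPoint, Prod.mk_sub_mk, Prod.ext_iff]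
      omega
    · simp only [InRegion, frogPoint, Prod.mk_sub_mk]
      omega
  · rw [frogCount_eq_zero (v := frogPoint (2 * m + 1 + 1) c - (1, 0, 0)), zero_add]
    · congr 1
      simp only [frogPoint, Prod.mk_sub_mk, Prod.ext_iff]
      omega
    · simp only [InRegion, frogPoint, Prod.mk_sub_mk]
      omega

def ballot (N : ℕ) : ℕ → ℤ
  | 0 => 1
  | c + 1 => N.choose (c + 1) - 2 * N.choose c

theorem ballot_succ_succ (N c : ℕ) :
    ballot (N + 1) (c + 1) = ballot N (c + 1) + ballot N c := by
  cases c with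
  | zero =>
    simp only [ballot, zero_add, Nat.choose_one_right, Nat.choose_zero_right]
    push_cast
    ring
  | succ c =>
    simp only [ballot, Nat.choose_succ_succ' N (c + 1), Nat.choose_succ_succ' N c]
    push_cast
    ring

theorem mul_ballot_succ (N c : ℕ) :
    ((c : ℤ) + 1) * ballot N (c + 1) = ((N : ℤ) - 3 * c - 2) * N.choose c := by
  have h := Nat.choose_succ_right_eq N c
  rcases le_or_gt c N with hc | hc
  · have h' : ((N.choose (c + 1) * (c + 1) : ℕ) : ℤ) = (N.choose c * (N - c) : ℕ) :=
      congrArg _ h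
    push_cast [Nat.cast_sub hc] at h'
    simp only [ballot]
    linear_combination h'
  · simp [ballot, Nat.choose_eq_zero_of_lt hc, Nat.choose_eq_zero_of_lt (Nat.lt_succ_of_lt hc)]

theorem ballot_three_mul_add_two (c : ℕ) : ballot (3 * c + 2) (c + 1) = 0 := by
  have h := mul_ballot_succ (3 * c + 2) c
  push_cast at h
  simpa [show (c : ℤ) + 1 ≠ 0 by positivity] using h

theorem frogPoint_sub_single (k c : ℕ) : frogPoint k (c + 1) - (0, 0, 1) = frogPoint k c := by
  simp [frogPoint, Prod.mk_sub_mk]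

theorem frogCount_frogPoint {k c : ℕ} (h : 2 * c ≤ k + 1) :
    frogCount (frogPoint k c) = ballot (k + c) c := by
  induction k generalizing c with
  | zero =>
    obtain rfl : c = 0 := by omega
    rw [show frogPoint 0 0 = 0 from rfl, frogCount_zero]
    rfl
  | succ k ihk =>
    induction c with
    | zero =>
      rw [frogCount_frogPoint_succ (by omega),
        frogCount_eq_zero (v := frogPoint (k + 1) 0 - (0, 0, 1)) (by simp [InRegion, frogPoint]),
        add_zero, ihk (by omega)]
      rfl
    | succ c ihc =>
      rcases (by omega : 2 * (c + 1) ≤ k + 1 ∨ k = 2 * c) with hk | rfl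
      · rw [frogCount_frogPoint_succ hk, frogPoint_sub_single, Nat.cast_add, ihk hk,
          ihc (by omega), show k + 1 + (c + 1) = k + (c + 1) + 1 by ring, ballot_succ_succ,
          show k + 1 + c = k + (c + 1) by ring]
      · rw [frogCount_eq_zero (inRegion_frogPoint_iff.not.mpr (by omega)),
          show 2 * c + 1 + (c + 1) = 3 * c + 2 by ring, ballot_three_mul_add_two]
        rfl

theorem mul_ballot_three_mul (n : ℕ) :
    (2 * n + 1 : ℤ) * ballot (3 * n) n = (3 * n).choose n := by
  cases n with
  | zero => rfl
  | succ m =>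
    have h₁ := mul_ballot_succ (3 * (m + 1)) m
    have h₂ : (((3 * (m + 1)).choose (m + 1) * (m + 1) : ℕ) : ℤ) =
        ((3 * (m + 1)).choose m * (2 * m + 3) : ℕ) := by
      rw [Nat.choose_succ_right_eq, show 3 * (m + 1) - m = 2 * m + 3 by omega]
    push_cast at h₁ h₂ ⊢
    refine mul_left_cancel₀ (show (m : ℤ) + 1 ≠ 0 by positivity) ?_
    linear_combination (2 * (m : ℤ) + 3) * h₁ - h₂

end FrogPaths

theorem frog_path_count (n : ℕ) :
    Nat.card {s : List (ℤ × ℤ × ℤ) // IsFrogPath n s} =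
      (3 * n).choose n / (2 * n + 1) := by
  have hpoint : frogPoint (2 * n) n = ((n : ℤ), (n : ℤ), (n : ℤ)) := by
    simp only [frogPoint, Prod.mk.injEq, Nat.cast_inj, and_true]
    omega
  have hcard : Nat.card {s // IsFrogPath n s} = frogCount (frogPoint (2 * n) n) := by
    rw [hpoint]
    exact Nat.card_congr (Equiv.subtypeEquivRight fun s => by simp [IsFrogPath, latticePaths])
  have hmul : (2 * n + 1) * frogCount (frogPoint (2 * n) n) = (3 * n).choose n := by
    have h := frogCount_frogPoint (k := 2 * n) (c := n) (by omega)
    rw [show 2 * n + n = 3 * n by ring] at h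
    exact_mod_cast h ▸ mul_ballot_three_mul n
  rw [hcard, ← hmul, Nat.mul_div_cancel_left _ (by omega)]
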